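/- For all 0 ≤ k < n, the truncated Catalan numbers satisfy c_{n+1}^k = Σ_{j=0}^{k} c_j · c_{n−j}^{k−j}, where c_j is the j-th Catalan number. -/

import Mathlib

/-!
Indexing `c_n^k` by the gap `d = n - k`, i.e. `b d i = c_{i+d}^i`, the claim says that the sequence
`b (d + 1)` is the Cauchy product of the Catalan sequence with `b d` (so `b d` has generating function
`C(x)^(d+1)`). Pascal's rule for the binomial coefficients gives `b (d+1) (i+1) = b (d+2) i + b d (i+1)`,
which, together with `b d 0 = 1` and `b 1 i = c_{i+1}` (Catalan's recurrence), lets the convolution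
identity propagate by induction on `i` and then on `d`.
-/

/-- Truncated Catalan (ballot) numbers: `cc n k = C(n+k,k) - C(n+k,k-1)` for `0 ≤ k ≤ n`,
and `0` otherwise. -/
def cc (n : ℕ) (k : ℤ) : ℤ :=
  if 0 ≤ k ∧ k ≤ (n : ℤ) then
    ((n + k.toNat).choose k.toNat : ℤ) -
      (if k = 0 then 0 else ((n + k.toNat).choose (k.toNat - 1) : ℤ))
  else 0

open Finset

lemma cc_zero_right (n : ℕ) : cc n 0 = 1 := by simp [cc]

lemma cc_of_lt {n : ℕ} {k : ℤ} (h : n < k) : cc n k = 0 := by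
  simp only [cc, if_neg (by omega : ¬(0 ≤ k ∧ k ≤ (n : ℤ)))]

/-- For `k = n` both sides vanish, the right one because `C(2n+1, n+1) = C(2n+1, n)`. -/
lemma cc_add_one_eq {n k : ℕ} (h : k ≤ n) :
    cc n ((k : ℤ) + 1) = ((n + k + 1).choose (k + 1) : ℤ) - (n + k + 1).choose k := by
  rcases h.lt_or_eq with h | rfl
  · have hk : (k : ℤ) + 1 = ((k + 1 : ℕ) : ℤ) := by push_cast; ring
    rw [hk, cc, if_pos (by omega), if_neg (by omega), Int.toNat_natCast, Nat.add_sub_cancel,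
      ← add_assoc]
  · rw [cc_of_lt (by omega), show k + k + 1 = 2 * k + 1 by ring, Nat.choose_symm_half, sub_self]

lemma cc_self (m : ℕ) : cc m m = catalan m := by
  cases m with
  | zero => simp [cc_zero_right]
  | succ m =>
    have hcat : ((m + 2 : ℕ) : ℤ) * catalan (m + 1) = (2 * m + 2).choose (m + 1) := by
      exact_mod_cast succ_mul_catalan_eq_centralBinom (m + 1)
    have hchoose : ((2 * m + 2).choose (m + 1) : ℤ) * (m + 1) = (2 * m + 2).choose m * (m + 2) := by
      have := Nat.choose_succ_right_eq (2 * m + 2) m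
      rw [show 2 * m + 2 - m = m + 2 by omega] at this
      exact_mod_cast this
    rw [Nat.cast_succ, cc_add_one_eq m.le_succ, show m + 1 + m + 1 = 2 * m + 2 by ring]
    refine mul_left_cancel₀ (by positivity : ((m + 2 : ℕ) : ℤ) ≠ 0) ?_
    rw [hcat]
    push_cast
    linear_combination hchoose

lemma cc_succ_add_one {m i : ℕ} (h : i ≤ m) :
    cc (m + 1) ((i : ℤ) + 1) = cc (m + 1) i + cc m ((i : ℤ) + 1) := by
  rw [cc_add_one_eq (by omega), cc_add_one_eq h]
  cases i with
  | zero => simp [cc_zero_right, add_comm]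
  | succ j =>
    rw [Nat.cast_succ, cc_add_one_eq (by omega), show m + 1 + (j + 1) + 1 = (m + j + 2) + 1 by ring,
      Nat.choose_succ_succ (m + j + 2) (j + 1), Nat.choose_succ_succ (m + j + 2) j,
      show m + 1 + j + 1 = m + j + 2 by ring, show m + (j + 1) + 1 = m + j + 2 by ring]
    push_cast
    ring

/-- The triangle indexed by the gap `d = n - k`, in which the recursion becomes a Cauchy product
with the Catalan sequence. -/
def ballot (d i : ℕ) : ℤ := cc (i + d) i

lemma ballot_zero_right (d : ℕ) : ballot d 0 = 1 := by simp [ballot, cc_zero_right]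

lemma ballot_zero_left (i : ℕ) : ballot 0 i = catalan i := cc_self i

lemma ballot_one_left (i : ℕ) : ballot 1 i = catalan (i + 1) := by
  have hpascal := cc_succ_add_one (le_refl i)
  rw [cc_of_lt (n := i) (by omega), add_zero, ← Nat.cast_succ, cc_self] at hpascal
  simpa [ballot, add_comm] using hpascal.symm

lemma ballot_succ_succ (d i : ℕ) : ballot (d + 1) (i + 1) = ballot (d + 2) i + ballot d (i + 1) := by
  have := cc_succ_add_one (m := i + d + 1) (i := i) (by omega)
  simp only [ballot, Nat.cast_succ]
  convert this using 2 <;> ring_nf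

theorem ballot_succ_eq_sum_antidiagonal (d k : ℕ) :
    ballot (d + 1) k = ∑ p ∈ antidiagonal k, (catalan p.1 : ℤ) * ballot d p.2 := by
  induction k generalizing d with
  | zero => simp [ballot_zero_right]
  | succ k ihk =>
    induction d with
    | zero =>
      rw [zero_add, ballot_one_left, catalan_succ']
      push_cast
      simp only [ballot_zero_left]
    | succ d ihd =>
      rw [Nat.sum_antidiagonal_succ', ballot_zero_right]
      simp only [ballot_succ_succ d, mul_add, sum_add_distrib, ← ihk]
      rw [ballot_succ_succ (d + 1) k, ihd, Nat.sum_antidiagonal_succ', ballot_zero_right]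
      ring

theorem truncated_catalan_recursion (n k : ℕ) (h : k < n) :
    cc (n + 1) (k : ℤ) =
      ∑ j ∈ Finset.range (k + 1), (catalan j : ℤ) * cc (n - j) ((k : ℤ) - (j : ℤ)) := by
  obtain ⟨d, rfl⟩ := Nat.exists_eq_add_of_le h.le
  have key := ballot_succ_eq_sum_antidiagonal d k
  rw [Nat.sum_antidiagonal_eq_sum_range_succ (fun i j => (catalan i : ℤ) * ballot d j)] at key
  simp only [ballot] at key
  rw [add_assoc, key]
  refine sum_congr rfl fun j hj => ?_
  have hj : j ≤ k := Nat.lt_succ_iff.mp (mem_range.mp hj)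
  rw [Nat.cast_sub hj, Nat.sub_add_comm hj]
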